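/- arXiv:2003.10305 — 4 statements merged into one kernel-verified Lean document; each statement's English description precedes it below -/
import Mathlib

section
/- Let K be a field of characteristic zero, L a Lie algebra over K, and M a Lie module over L which is finite-dimensional as a K-vector space. Suppose h, e, f ∈ L form an sl₂-triple, i.e. ⁅h, e⁆ = 2·e, ⁅h, f⁆ = −2·f, and ⁅e, f⁆ = h. If m ∈ M satisfies ⁅e, m⁆ = 0 and ⁅h, m⁆ = 0, then ⁅f, m⁆ = 0. -/
/-! A nonzero `m` as in the statement is a primitive vector of weight `0` for the `sl₂`-triple.
In a finite-dimensional module the `f`-string `m, f m, f² m, …` of a primitive vector of weight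
`n` vanishes from `fⁿ⁺¹ m` on, so `f m = 0`. -/

namespace IsSl2Triple

variable {R L M : Type*} [CommRing R] [LieRing L] [LieAlgebra R L]
  [AddCommGroup M] [Module R M] [LieRingModule L M] [LieModule R L M]

lemma of_lie_smul {h e f : L} (hh : h ≠ 0) (hhe : ⁅h, e⁆ = (2 : R) • e)
    (hhf : ⁅h, f⁆ = (-2 : R) • f) (hef : ⁅e, f⁆ = h) : IsSl2Triple h e f where
  h_ne_zero := hh
  lie_e_f := hef
  lie_h_e_nsmul := by rw [hhe]; module
  lie_h_f_nsmul := by rw [hhf]; module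

variable (R) in
lemma lie_f_eq_zero_of_lie_e_eq_zero_of_lie_h_eq_zero [IsDomain R] [CharZero R]
    [IsNoetherian R M] [Module.IsTorsionFree R M] {h e f : L} (t : IsSl2Triple h e f) {m : M}
    (hem : ⁅e, m⁆ = 0) (hhm : ⁅h, m⁆ = 0) : ⁅f, m⁆ = 0 := by
  rcases eq_or_ne m 0 with rfl | hm
  · exact lie_zero f
  have P : t.HasPrimitiveVectorWith m (0 : R) :=
    { ne_zero := hm
      lie_h := by rw [hhm, zero_smul]
      lie_e := hem }
  simpa using P.pow_toEnd_f_eq_zero_of_eq_nat (n := 0) Nat.cast_zero.symm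

end IsSl2Triple

/-- If `(h, e, f)` is an `sl₂`-triple in a Lie algebra `L` over a field of
characteristic zero, and `m` is a vector of a finite-dimensional Lie module
annihilated by `e` and of `h`-weight zero, then `m` is also annihilated by `f`. -/
theorem stmt_6 (K : Type*) [Field K] [CharZero K]
    (L : Type*) [LieRing L] [LieAlgebra K L]
    (M : Type*) [AddCommGroup M] [Module K M] [LieRingModule L M] [LieModule K L M]
    [FiniteDimensional K M]
    (h e f : L)
    (hhe : ⁅h, e⁆ = (2 : K) • e) (hhf : ⁅h, f⁆ = (-2 : K) • f) (hef : ⁅e, f⁆ = h)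
    (m : M) (hem : ⁅e, m⁆ = 0) (hhm : ⁅h, m⁆ = 0) :
    ⁅f, m⁆ = 0 := by
  rcases eq_or_ne h 0 with rfl | hh
  · have hf : f = 0 := by
      have h0 : (-2 : K) • f = 0 := by rw [← hhf, zero_lie]
      exact (smul_eq_zero.mp h0).resolve_left (by norm_num)
    rw [hf, zero_lie]
  · exact (IsSl2Triple.of_lie_smul hh hhe hhf hef).lie_f_eq_zero_of_lie_e_eq_zero_of_lie_h_eq_zero
      K hem hhm
end

section
/- Let R be a commutative ring in which 2 is invertible, Ω an R-module, and δ : R → Ω a derivation (an additive map satisfying δ(a·b) = a • δ(b) + b • δ(a)). Let N ≥ 1 and let P be an N×N matrix over R with P·P = P. In the exterior algebra Λ(Ω) over R, let dP denote the N×N matrix with entries ι(δ(P_{ij})), where ι : Ω → Λ(Ω) is the canonical inclusion of degree-one elements. Then trace(dP · dP · dP) = 0, where the product is matrix multiplication over the (noncommutative) ring Λ(Ω). -/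
/-!
Differentiating `P * P = P` gives `P dP + dP P = dP`, so the involution `J = 2P - 1` anticommutes
with `dP`, hence with `dP³`. The entries of `J` are scalars, so the trace is cyclic past `J`, and
`tr (dP³) = tr (J J dP³) = tr (J dP³ J) = -tr (dP³)`; as `2` is invertible, `tr (dP³) = 0`.
-/

theorem Matrix.trace_mul_comm_of_commute {m n S : Type*} [Fintype m] [Fintype n] [Semiring S]
    (A : Matrix m n S) (B : Matrix n m S) (h : ∀ i j, Commute (A i j) (B j i)) :
    (A * B).trace = (B * A).trace := by
  simp only [Matrix.trace, Matrix.diag, Matrix.mul_apply]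
  rw [Finset.sum_comm]
  exact Finset.sum_congr rfl fun i _ => Finset.sum_congr rfl fun j _ => h j i

theorem mul_pow_of_mul_eq_neg {A : Type*} [Ring A] {j d : A} (h : j * d = -(d * j)) (n : ℕ) :
    j * d ^ n = (-1) ^ n * d ^ n * j := by
  induction n with
  | zero => simp
  | succ n ih =>
    rw [pow_succ, ← mul_assoc, ih, mul_assoc _ j, h, pow_succ]
    simp only [mul_neg, neg_mul, mul_one, mul_assoc]

namespace IsIdempotentElem

variable {A : Type*} [Ring A] {q : A}

theorem two_mul_sub_one_mul_self (hq : IsIdempotentElem q) :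
    (2 * q - 1) * (2 * q - 1) = 1 := by
  have : (2 * q - 1) * (2 * q - 1) = 4 * (q * q) - 4 * q + 1 := by noncomm_ring
  rw [this, hq.eq]
  abel

theorem two_mul_sub_one_mul_eq_neg {d : A} (h : q * d + d * q = d) :
    (2 * q - 1) * d = -(d * (2 * q - 1)) := by
  have hqd : q * d = d - d * q := eq_sub_of_add_eq h
  calc (2 * q - 1) * d = 2 * (q * d) - d := by noncomm_ring
    _ = -(d * (2 * q - 1)) := by rw [hqd]; noncomm_ring

end IsIdempotentElem

section Derivation

variable {K R S : Type*} [CommSemiring K] [CommRing R] [Ring S] [Algebra K R] [Algebra R S]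
  [Module K S] (D : Derivation K R S) {n : Type*} [Fintype n]

theorem Derivation.map_matrix_mul (M N : Matrix n n R) :
    (M * N).map D = M.map (algebraMap R S) * N.map D + M.map D * N.map (algebraMap R S) := by
  ext i k
  simp only [Matrix.map_apply, Matrix.add_apply, Matrix.mul_apply, map_sum, Derivation.leibniz,
    Algebra.smul_def, Finset.sum_add_distrib, Algebra.commutes]

theorem Derivation.map_matrix_of_isIdempotentElem {P : Matrix n n R} (hP : IsIdempotentElem P) :
    P.map (algebraMap R S) * P.map D + P.map D * P.map (algebraMap R S) = P.map D := by
  rw [← D.map_matrix_mul, hP.eq]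

end Derivation

theorem Matrix.trace_eq_zero_of_mul_eq_neg {R S n : Type*} [CommRing R] [Invertible (2 : R)]
    [Ring S] [Algebra R S] [Fintype n] [DecidableEq n] {U : Matrix n n R} (hU : U * U = 1)
    {A : Matrix n n S} (hA : U.map (algebraMap R S) * A = -(A * U.map (algebraMap R S))) :
    A.trace = 0 := by
  set J := U.map (algebraMap R S)
  have hJ : J * J = 1 := by
    rw [← Matrix.map_mul, hU, Matrix.map_one _ (map_zero _) (map_one _)]
  have hneg : A.trace = -A.trace := calc
    A.trace = (J * (J * A)).trace := by rw [← Matrix.mul_assoc, hJ, Matrix.one_mul]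
    _ = (J * A * J).trace := J.trace_mul_comm_of_commute _ fun _ _ => Algebra.commutes _ _
    _ = -A.trace := by
      rw [hA, Matrix.neg_mul, Matrix.mul_assoc, hJ, Matrix.mul_one, Matrix.trace_neg]
  have h2 : (2 : R) • A.trace = (2 : R) • 0 := by
    rw [two_smul, smul_zero]
    nth_rw 1 [hneg]
    exact neg_add_cancel _
  exact (isUnit_of_invertible (2 : R)).smul_left_cancel.mp h2

theorem stmt_9_general (R : Type*) [CommRing R] [Invertible (2 : R)]
    (Ω : Type*) [AddCommGroup Ω] [Module R Ω]
    (δ : R → Ω) (hadd : ∀ a b, δ (a + b) = δ a + δ b)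
    (hleib : ∀ a b, δ (a * b) = a • δ b + b • δ a)
    (N : ℕ)
    (P : Matrix (Fin N) (Fin N) R) (hP : P * P = P)
    (dP : Matrix (Fin N) (Fin N) (ExteriorAlgebra R Ω))
    (hdP : ∀ i j, dP i j = ExteriorAlgebra.ι R (δ (P i j))) :
    (dP * dP * dP).trace = 0 := by
  let D : Derivation ℤ R (ExteriorAlgebra R Ω) :=
    Derivation.mk'
      ((ExteriorAlgebra.ι R).toAddMonoidHom.comp (AddMonoidHom.mk' δ hadd)).toIntLinearMap
      fun a b => by simp [hleib]
  have hdP_eq : dP = P.map D := Matrix.ext hdP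
  set Q := P.map (algebraMap R (ExteriorAlgebra R Ω))
  have hQdP : Q * dP + dP * Q = dP := hdP_eq ▸ D.map_matrix_of_isIdempotentElem hP
  have hJ : (2 * P - 1).map (algebraMap R (ExteriorAlgebra R Ω)) = 2 * Q - 1 := by
    rw [← RingHom.mapMatrix_apply, map_sub, map_mul, map_ofNat, map_one, RingHom.mapMatrix_apply]
  refine Matrix.trace_eq_zero_of_mul_eq_neg (IsIdempotentElem.two_mul_sub_one_mul_self hP) ?_
  rw [hJ, ← pow_three',
    mul_pow_of_mul_eq_neg (IsIdempotentElem.two_mul_sub_one_mul_eq_neg hQdP)]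
  noncomm_ring

/-- For an idempotent matrix `P` over a commutative ring `R` in which `2` is
invertible, and a derivation `δ : R → Ω`, the matrix `dP` with entries
`ι (δ (P i j))` in the exterior algebra `Λ(Ω)` satisfies
`trace (dP * dP * dP) = 0`. -/
theorem stmt_9 (R : Type*) [CommRing R] [Invertible (2 : R)]
    (Ω : Type*) [AddCommGroup Ω] [Module R Ω]
    (δ : R → Ω) (hadd : ∀ a b, δ (a + b) = δ a + δ b)
    (hleib : ∀ a b, δ (a * b) = a • δ b + b • δ a)
    (N : ℕ) (hN : 1 ≤ N)
    (P : Matrix (Fin N) (Fin N) R) (hP : P * P = P)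
    (dP : Matrix (Fin N) (Fin N) (ExteriorAlgebra R Ω))
    (hdP : ∀ i j, dP i j = ExteriorAlgebra.ι R (δ (P i j))) :
    (dP * dP * dP).trace = 0 :=
  stmt_9_general R Ω δ hadd hleib N P hP dP hdP
end

section
/- Let R be a commutative ring, Ω an R-module, and δ₁, δ₂ : R → Ω two derivations; set δ := δ₁ + δ₂. Let N ≥ 1 and let u, v : {1,…,N} → R satisfy Σ_k u_k · v_k = 1, δ₂(u_k) = 0 and δ₁(v_k) = 0 for all k. Define P_{ij} := u_i · v_j. Then in the exterior algebra Λ(Ω) over R one has Σ_{i,j,k} algebraMap(P_{ij}) · ι(δ(P_{jk})) · ι(δ(P_{ki})) = Σ_{i,j} ι(δ₂(P_{ij})) · ι(δ₁(P_{ji})), where ι : Ω → Λ(Ω) is the canonical inclusion of degree-one elements and algebraMap : R → Λ(Ω) the inclusion of scalars. -/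
/-!
Write `a j = ι (δ₁ (u j))` and `b k = ι (δ₂ (v k))`. Since `δ₂` kills `u` and `δ₁` kills `v`,
`ι (δ (P j k)) = v k • a j + u j • b k`, `ι (δ₂ (P i j)) = u i • b j` and `ι (δ₁ (P j i)) = v i • a j`,
while applying `δ₁`, `δ₂` to `Σ u k v k = 1` gives `Σ v k • a k = 0 = Σ u k • b k`. With these
relations both sides reduce to `Σ_k b k * a k` by a computation valid in any `R`-algebra:
no anticommutativity is needed.
-/

open Finset

theorem Derivation.sum_smul_add_sum_smul_eq_zero {ι S A M : Type*} [Fintype ι] [CommSemiring S]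
    [CommSemiring A] [Algebra S A] [AddCommMonoid M] [Module A M] [Module S M]
    (D : Derivation S A M) {u v : ι → A} (huv : ∑ k, u k * v k = 1) :
    ∑ k, u k • D (v k) + ∑ k, v k • D (u k) = 0 := by
  rw [← sum_add_distrib]
  simp only [← D.leibniz, ← map_sum, huv, D.map_one_eq_zero]

section

variable {ι R A : Type*} [Fintype ι] [CommRing R] [Ring A] [Algebra R A]
  {u v : ι → R} {a b : ι → A}

theorem sum_smul_add_smul_mul_smul_add_smul (huv : ∑ k, u k * v k = 1)
    (ha : ∑ k, v k • a k = 0) (hb : ∑ k, u k • b k = 0) (i j : ι) :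
    ∑ k, (v k • a j + u j • b k) * (v i • a k + u k • b i)
      = (u j * v i) • ∑ k, b k * a k + a j * b i := by
  have haa : ∑ k, (v k • a j) * (v i • a k) = v i • (a j * ∑ k, v k • a k) := by
    simp only [mul_sum, smul_sum, smul_mul_assoc, mul_smul_comm, smul_comm (v i)]
  have hab : ∑ k, (v k • a j) * (u k • b i) = (∑ k, u k * v k) • (a j * b i) := by
    simp only [sum_smul, smul_mul_smul_comm, mul_comm (v _)]
  have hba : ∑ k, (u j • b k) * (v i • a k) = (u j * v i) • ∑ k, b k * a k := by
    simp only [smul_sum, smul_mul_smul_comm]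
  have hbb : ∑ k, (u j • b k) * (u k • b i) = u j • ((∑ k, u k • b k) * b i) := by
    simp only [sum_mul, smul_sum, smul_mul_assoc, mul_smul_comm, smul_comm (u j)]
  simp only [add_mul, mul_add, sum_add_distrib, haa, hab, hba, hbb, ha, hb, huv, mul_zero,
    zero_mul, smul_zero, one_smul, zero_add, add_zero]

theorem sum_sum_sum_smul_mul_eq (huv : ∑ k, u k * v k = 1)
    (ha : ∑ k, v k • a k = 0) (hb : ∑ k, u k • b k = 0) :
    ∑ i, ∑ j, ∑ k, (u i * v j) • ((v k • a j + u j • b k) * (v i • a k + u k • b i))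
      = ∑ i, ∑ j, (u i • b j) * (v i • a j) := by
  have hab : ∑ i, ∑ j, (u i * v j) • (a j * b i) = 0 := by
    rw [← mul_zero (∑ j, v j • a j), ← hb, sum_mul_sum, sum_comm]
    simp only [smul_mul_smul_comm, mul_comm (v _)]
  have hc : ∀ c : A, ∑ i, ∑ j, (u i * v j) • (u j * v i) • c = c := by
    intro c
    have hcoeff : ∑ i, ∑ j, u i * v j * (u j * v i) = (∑ i, u i * v i) * ∑ j, u j * v j := by
      rw [sum_mul_sum]
      exact sum_congr rfl fun i _ => sum_congr rfl fun j _ => by ring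
    simp only [smul_smul, ← sum_smul, hcoeff, huv, one_mul, one_smul]
  simp only [← smul_sum, sum_smul_add_smul_mul_smul_add_smul huv ha hb, smul_add, sum_add_distrib,
    hab, hc, add_zero]
  simp only [smul_mul_smul_comm, ← smul_sum, ← sum_smul, huv, one_smul]
end

theorem stmt_12_general (R : Type*) [CommRing R]
    (Ω : Type*) [AddCommGroup Ω] [Module R Ω]
    (δ₁ δ₂ : R → Ω)
    (hadd₁ : ∀ a b, δ₁ (a + b) = δ₁ a + δ₁ b)
    (hleib₁ : ∀ a b, δ₁ (a * b) = a • δ₁ b + b • δ₁ a)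
    (hadd₂ : ∀ a b, δ₂ (a + b) = δ₂ a + δ₂ b)
    (hleib₂ : ∀ a b, δ₂ (a * b) = a • δ₂ b + b • δ₂ a)
    (δ : R → Ω) (hδ : ∀ a, δ a = δ₁ a + δ₂ a)
    (N : ℕ) (u v : Fin N → R)
    (huv : ∑ k, u k * v k = 1)
    (hu : ∀ k, δ₂ (u k) = 0) (hv : ∀ k, δ₁ (v k) = 0)
    (P : Fin N → Fin N → R) (hP : ∀ i j, P i j = u i * v j) :
    ∑ i : Fin N, ∑ j : Fin N, ∑ k : Fin N,
        algebraMap R (ExteriorAlgebra R Ω) (P i j) *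
          ExteriorAlgebra.ι R (δ (P j k)) * ExteriorAlgebra.ι R (δ (P k i))
      = ∑ i : Fin N, ∑ j : Fin N,
          ExteriorAlgebra.ι R (δ₂ (P i j)) * ExteriorAlgebra.ι R (δ₁ (P j i)) := by
  let D₁ : Derivation ℤ R Ω := .mk' (AddMonoidHom.mk' δ₁ hadd₁).toIntLinearMap hleib₁
  let D₂ : Derivation ℤ R Ω := .mk' (AddMonoidHom.mk' δ₂ hadd₂).toIntLinearMap hleib₂
  have hδ₁P : ∀ j k, δ₁ (P j k) = v k • δ₁ (u j) := by
    intro j k; rw [hP, hleib₁, hv, smul_zero, zero_add]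
  have hδ₂P : ∀ j k, δ₂ (P j k) = u j • δ₂ (v k) := by
    intro j k; rw [hP, hleib₂, hu, smul_zero, add_zero]
  have ha : ∑ k, v k • ExteriorAlgebra.ι R (δ₁ (u k)) = 0 := by
    have h : ∑ k, u k • δ₁ (v k) + ∑ k, v k • δ₁ (u k) = 0 :=
      D₁.sum_smul_add_sum_smul_eq_zero huv
    simp only [hv, smul_zero, sum_const_zero, zero_add] at h
    simp only [← map_smul, ← map_sum, h, map_zero]
  have hb : ∑ k, u k • ExteriorAlgebra.ι R (δ₂ (v k)) = 0 := by
    have h : ∑ k, u k • δ₂ (v k) + ∑ k, v k • δ₂ (u k) = 0 :=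
      D₂.sum_smul_add_sum_smul_eq_zero huv
    simp only [hu, smul_zero, sum_const_zero, add_zero] at h
    simp only [← map_smul, ← map_sum, h, map_zero]
  convert sum_sum_sum_smul_mul_eq huv ha hb using 4 <;>
    simp only [hδ, map_add, hδ₁P, hδ₂P, map_smul]
  rw [mul_assoc, Algebra.algebraMap_eq_smul_one, smul_one_mul, hP]

/-- For `P i j = u i * v j` with `Σ u k * v k = 1`, and derivations `δ₁`, `δ₂`
with `δ₂ (u k) = 0`, `δ₁ (v k) = 0`, setting `δ = δ₁ + δ₂`, one has the identity
`Σ_{i,j,k} P̂ i j · ι(δ (P j k)) · ι(δ (P k i)) = Σ_{i,j} ι(δ₂ (P i j)) · ι(δ₁ (P j i))`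
in the exterior algebra `Λ(Ω)` (i.e. `Tr(P dP ∧ dP) = Tr(∂̄P ∧ ∂P)`). -/
theorem stmt_12 (R : Type*) [CommRing R]
    (Ω : Type*) [AddCommGroup Ω] [Module R Ω]
    (δ₁ δ₂ : R → Ω)
    (hadd₁ : ∀ a b, δ₁ (a + b) = δ₁ a + δ₁ b)
    (hleib₁ : ∀ a b, δ₁ (a * b) = a • δ₁ b + b • δ₁ a)
    (hadd₂ : ∀ a b, δ₂ (a + b) = δ₂ a + δ₂ b)
    (hleib₂ : ∀ a b, δ₂ (a * b) = a • δ₂ b + b • δ₂ a)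
    (δ : R → Ω) (hδ : ∀ a, δ a = δ₁ a + δ₂ a)
    (N : ℕ) (hN : 1 ≤ N) (u v : Fin N → R)
    (huv : ∑ k, u k * v k = 1)
    (hu : ∀ k, δ₂ (u k) = 0) (hv : ∀ k, δ₁ (v k) = 0)
    (P : Fin N → Fin N → R) (hP : ∀ i j, P i j = u i * v j) :
    ∑ i : Fin N, ∑ j : Fin N, ∑ k : Fin N,
        algebraMap R (ExteriorAlgebra R Ω) (P i j) *
          ExteriorAlgebra.ι R (δ (P j k)) * ExteriorAlgebra.ι R (δ (P k i))
      = ∑ i : Fin N, ∑ j : Fin N,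
          ExteriorAlgebra.ι R (δ₂ (P i j)) * ExteriorAlgebra.ι R (δ₁ (P j i)) :=
  stmt_12_general R Ω δ₁ δ₂ hadd₁ hleib₁ hadd₂ hleib₂ δ hδ N u v huv hu hv P hP
end

section
/- Let k be a commutative ring, A an associative unital k-algebra, σ : A → A a k-algebra automorphism, N ≥ 1, and P an N×N matrix over A with P·P = P. Suppose q : {1,…,N} → kˣ is a family of invertible scalars such that σ(P_{ij}) = (q_i · q_j⁻¹) • P_{ij} for all i, j. Then in A ⊗_k A the following identity holds: Σ_{i,j,l} q_i • [ ((2P−1)_{ij} · P_{jl}) ⊗ P_{li} − (2P−1)_{ij} ⊗ (P_{jl} · P_{li}) + (σ(P_{li}) · (2P−1)_{ij}) ⊗ P_{jl} ] = 1 ⊗ (Σ_i q_i • P_{ii}), where (2P−1)_{ij} := 2·P_{ij} − δ_{ij}·1. In other words, the σ-twisted Hochschild boundary b_σ(a₀⊗a₁⊗a₂) = a₀a₁⊗a₂ − a₀⊗a₁a₂ + σ(a₂)a₀⊗a₁ applied to the 2-chain C_q(P) := Σ_{i,j,l} q_i • ((2P−1)_{ij} ⊗ P_{jl} ⊗ P_{li})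 equals 1 ⊗ Tr_q(P), where Tr_q(P) := Σ_i q_i • P_{ii} is the q-weighted trace. -/
/-!
Write `T(M, N) = Σ_{i,l} q_i • (M_{il} ⊗ N_{li})` (`Matrix.weightedTraceTmul`). Each face of
the boundary contracts one matrix product inside this pairing: the three faces of `b_σ(C_q(P))` are `T(QP, P)`, `T(Q, P²)`
and, because the twist `σ(P_{li}) = q_l q_i⁻¹ P_{li}` moves the weight from `i` to `l`,
`T(PQ, P)`. With `Q = 2P − 1` and `P² = P` we get `QP = PQ = P`, so the boundary is
`T(P, P) − (2 T(P, P) − T(1, P)) + T(P, P) = T(1, P) = 1 ⊗ Tr_q(P)`.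
-/

open TensorProduct

namespace IsIdempotentElem

variable {R : Type*} [Ring R] {p : R}

lemma two_nsmul_sub_one_mul_self (hp : IsIdempotentElem p) : (2 • p - 1) * p = p := by
  rw [sub_mul, one_mul, smul_mul_assoc, hp.eq, two_smul, add_sub_cancel_right]

lemma mul_two_nsmul_sub_one (hp : IsIdempotentElem p) : p * (2 • p - 1) = p := by
  rw [mul_sub, mul_one, mul_smul_comm, hp.eq, two_smul, add_sub_cancel_right]

end IsIdempotentElem

namespace Matrix

variable {k A n : Type*} [CommRing k] [Ring A] [Algebra k A] [Fintype n]

def weightedTraceTmul (w : n → k) (M N : Matrix n n A) : A ⊗[k] A :=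
  ∑ i, ∑ l, w i • (M i l ⊗ₜ[k] N l i)

lemma weightedTraceTmul_sub_left (w : n → k) (M M' N : Matrix n n A) :
    weightedTraceTmul w (M - M') N = weightedTraceTmul w M N - weightedTraceTmul w M' N := by
  simp only [weightedTraceTmul, sub_apply, sub_tmul, smul_sub, Finset.sum_sub_distrib]

lemma weightedTraceTmul_nsmul_left (w : n → k) (m : ℕ) (M N : Matrix n n A) :
    weightedTraceTmul w (m • M) N = m • weightedTraceTmul w M N := by
  simp only [weightedTraceTmul, smul_apply, smul_tmul', smul_comm (w _), Finset.smul_sum]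

lemma weightedTraceTmul_one_left [DecidableEq n] (w : n → k) (N : Matrix n n A) :
    weightedTraceTmul w 1 N = (1 : A) ⊗ₜ[k] ∑ i, w i • N i i := by
  simp only [weightedTraceTmul, one_apply, ite_tmul, smul_ite, smul_zero,
    Finset.sum_ite_eq, Finset.mem_univ, if_true, tmul_sum, tmul_smul]

lemma sum_smul_mul_tmul_eq_weightedTraceTmul_mul_left (w : n → k) (M M' N : Matrix n n A) :
    ∑ i, ∑ j, ∑ l, w i • ((M i j * M' j l) ⊗ₜ[k] N l i) = weightedTraceTmul w (M * M') N := by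
  refine Finset.sum_congr rfl fun i _ => ?_
  rw [Finset.sum_comm]
  simp only [mul_apply, sum_tmul, Finset.smul_sum]

lemma sum_smul_tmul_mul_eq_weightedTraceTmul_mul_right (w : n → k) (M N N' : Matrix n n A) :
    ∑ i, ∑ j, ∑ l, w i • (M i j ⊗ₜ[k] (N j l * N' l i)) = weightedTraceTmul w M (N * N') := by
  simp only [weightedTraceTmul, mul_apply, tmul_sum, Finset.smul_sum]

lemma sum_smul_twist_mul_tmul_eq_weightedTraceTmul_mul_left (σ : A → A) (q : n → kˣ)
    (P : Matrix n n A) (hσ : ∀ i j, σ (P i j) = ((q i * (q j)⁻¹ : kˣ) : k) • P i j)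
    (M N : Matrix n n A) :
    ∑ i, ∑ j, ∑ l, (q i : k) • ((σ (P l i) * M i j) ⊗ₜ[k] N j l) =
      weightedTraceTmul (fun i => (q i : k)) (P * M) N := by
  have weight_shift : ∀ i j l, (q i : k) • ((σ (P l i) * M i j) ⊗ₜ[k] N j l) =
      (q l : k) • ((P l i * M i j) ⊗ₜ[k] N j l) := by
    intro i j l
    rw [hσ, smul_mul_assoc, ← smul_tmul', smul_smul, Units.val_mul, mul_left_comm,
      Units.mul_inv, mul_one]
  simp only [weight_shift, weightedTraceTmul, mul_apply, sum_tmul, Finset.smul_sum]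
  rw [Finset.sum_comm]
  exact (Finset.sum_congr rfl fun _ _ => Finset.sum_comm).trans Finset.sum_comm

end Matrix

theorem stmt_14_general (k : Type*) [CommRing k] (A : Type*) [Ring A] [Algebra k A]
    (σ : A ≃ₐ[k] A)
    (N : ℕ)
    (P : Matrix (Fin N) (Fin N) A) (hP : P * P = P)
    (q : Fin N → kˣ)
    (hσ : ∀ i j, σ (P i j) = ((q i * (q j)⁻¹ : kˣ) : k) • P i j)
    (Q : Matrix (Fin N) (Fin N) A) (hQ : Q = 2 • P - 1) :
    ∑ i, ∑ j, ∑ l,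
        (q i : k) •
          ((Q i j * P j l) ⊗ₜ[k] P l i
            - Q i j ⊗ₜ[k] (P j l * P l i)
            + (σ (P l i) * Q i j) ⊗ₜ[k] P j l)
      = (1 : A) ⊗ₜ[k] (∑ i, (q i : k) • P i i) := by
  have hQP : Q * P = P := hQ ▸ IsIdempotentElem.two_nsmul_sub_one_mul_self hP
  have hPQ : P * Q = P := hQ ▸ IsIdempotentElem.mul_two_nsmul_sub_one hP
  simp only [smul_sub, smul_add, Finset.sum_sub_distrib, Finset.sum_add_distrib]
  rw [Matrix.sum_smul_mul_tmul_eq_weightedTraceTmul_mul_left,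
    Matrix.sum_smul_tmul_mul_eq_weightedTraceTmul_mul_right,
    Matrix.sum_smul_twist_mul_tmul_eq_weightedTraceTmul_mul_left σ q P hσ, hQP, hPQ, hP, hQ,
    Matrix.weightedTraceTmul_sub_left, Matrix.weightedTraceTmul_nsmul_left,
    Matrix.weightedTraceTmul_one_left]
  abel

/-- The σ-twisted Hochschild boundary of the quantum-trace Chern-character 2-chain
`C_q(P) = Σ q_i • ((2P−1)_{ij} ⊗ P_{jl} ⊗ P_{li})` of an idempotent matrix `P`
satisfying `σ (P i j) = (q i / q j) • P i j` equals `1 ⊗ Tr_q(P)` in `A ⊗[k] A`. -/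
theorem stmt_14 (k : Type*) [CommRing k] (A : Type*) [Ring A] [Algebra k A]
    (σ : A ≃ₐ[k] A)
    (N : ℕ) (hN : 1 ≤ N)
    (P : Matrix (Fin N) (Fin N) A) (hP : P * P = P)
    (q : Fin N → kˣ)
    (hσ : ∀ i j, σ (P i j) = ((q i * (q j)⁻¹ : kˣ) : k) • P i j)
    (Q : Matrix (Fin N) (Fin N) A) (hQ : Q = 2 • P - 1) :
    ∑ i, ∑ j, ∑ l,
        (q i : k) •
          ((Q i j * P j l) ⊗ₜ[k] P l i
            - Q i j ⊗ₜ[k] (P j l * P l i)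
            + (σ (P l i) * Q i j) ⊗ₜ[k] P j l)
      = (1 : A) ⊗ₜ[k] (∑ i, (q i : k) • P i i) :=
  stmt_14_general k A σ N P hP q hσ Q hQ
end
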